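/- For every complex number q with |q| < 1, the sum over odd positive integers n of q^n ∏_{m=1}^∞ (1 − q^{m+n}) equals (1/2) · [1 − (∏_{n=1}^∞ (1 − q^n))^2 / ∏_{n=1}^∞ (1 − q^{2n})]; that is, F_{S_{1,2}}(q) = (1/2)[1 − (q;q)_∞^2/(q^2;q^2)_∞]. -/

import Mathlib

/-!
Write `E(z) = ∑ zⁿ / (q; q)ₙ`. Splitting off the factor `1 - qⁿ` of `(q; q)ₙ` gives the
functional equation `(1 - z) E(z) = E(qz)`; iterating it and letting `qᴺ z → 0` yields Euler's
identity `(z; q)_∞ E(z) = 1`. Since `(q^{n+1}; q)_∞ = (q; q)_∞ / (q; q)ₙ`, this evaluates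
`∑ zⁿ (q^{n+1}; q)_∞ = (q; q)_∞ / (z; q)_∞`. Taking half the difference of the cases `z = q` and
`z = -q` keeps exactly the odd `n`, and `(q; q)_∞ (-q; q)_∞ = (q²; q²)_∞` finishes the proof.
-/

open Filter Finset Topology

/-- `(a; q)ₙ` -/
noncomputable def qPochhammer (a q : ℂ) (n : ℕ) : ℂ := ∏ k ∈ range n, (1 - a * q ^ k)

/-- `(a; q)_∞` -/
noncomputable def qPochhammerInf (a q : ℂ) : ℂ := ∏' k, (1 - a * q ^ k)

noncomputable def eulerSeries (q z : ℂ) : ℂ := ∑' n, z ^ n / qPochhammer q q n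

section QPochhammer

variable {a q z : ℂ}

lemma norm_pow_mul_lt_one (hq : ‖q‖ ≤ 1) (hz : ‖z‖ < 1) (k : ℕ) : ‖q ^ k * z‖ < 1 := by
  rw [norm_mul, norm_pow]
  exact (mul_le_of_le_one_left (norm_nonneg z) (pow_le_one₀ (norm_nonneg q) hq)).trans_lt hz

lemma mul_pow_ne_one (ha : ‖a‖ < 1) (hq : ‖q‖ ≤ 1) (k : ℕ) : a * q ^ k ≠ 1 := by
  intro h
  simpa [mul_comm, h] using norm_pow_mul_lt_one hq ha k

lemma summable_norm_mul_pow (a : ℂ) (hq : ‖q‖ < 1) : Summable fun k : ℕ ↦ ‖a * q ^ k‖ := by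
  simpa [norm_mul, norm_pow] using
    (summable_geometric_of_lt_one (norm_nonneg q) hq).mul_left ‖a‖

lemma multipliable_one_sub_mul_pow (a : ℂ) (hq : ‖q‖ < 1) :
    Multipliable fun k : ℕ ↦ 1 - a * q ^ k := by
  simpa [sub_eq_add_neg] using multipliable_one_add_of_summable (f := fun k ↦ -(a * q ^ k))
    (by simpa using summable_norm_mul_pow a hq)

lemma tendsto_qPochhammer (a : ℂ) (hq : ‖q‖ < 1) :
    Tendsto (qPochhammer a q) atTop (𝓝 (qPochhammerInf a q)) :=
  (multipliable_one_sub_mul_pow a hq).tendsto_prod_tprod_nat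

lemma qPochhammer_succ (a q : ℂ) (n : ℕ) :
    qPochhammer a q (n + 1) = qPochhammer a q n * (1 - a * q ^ n) :=
  prod_range_succ _ n

lemma qPochhammer_ne_zero (ha : ∀ k, a * q ^ k ≠ 1) (n : ℕ) : qPochhammer a q n ≠ 0 :=
  prod_ne_zero_iff.2 fun k _ ↦ sub_ne_zero.2 (ha k).symm

lemma qPochhammerInf_ne_zero (hq : ‖q‖ < 1) (ha : ∀ k, a * q ^ k ≠ 1) :
    qPochhammerInf a q ≠ 0 := by
  simpa [qPochhammerInf, sub_eq_add_neg] using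
    tprod_one_add_ne_zero_of_summable (fun k ↦ by simpa [← sub_eq_add_neg, sub_ne_zero] using
      (ha k).symm) (by simpa using summable_norm_mul_pow a hq)

lemma qPochhammer_mul_qPochhammerInf (a : ℂ) (hq : ‖q‖ < 1) (n : ℕ) :
    qPochhammer a q n * qPochhammerInf (a * q ^ n) q = qPochhammerInf a q := by
  have htail : (fun k ↦ 1 - a * q ^ (k + n)) = fun k ↦ 1 - a * q ^ n * q ^ k := by
    ext k; ring
  have h := Multipliable.prod_mul_tprod_nat_mul' (f := fun k ↦ 1 - a * q ^ k) (k := n)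
    (by rw [htail]; exact multipliable_one_sub_mul_pow _ hq)
  rwa [htail] at h

lemma qPochhammerInf_sq_sq (hq : ‖q‖ < 1) :
    qPochhammerInf (q ^ 2) (q ^ 2) = qPochhammerInf q q * qPochhammerInf (-q) q := by
  rw [qPochhammerInf, qPochhammerInf, qPochhammerInf,
    ← (multipliable_one_sub_mul_pow q hq).tprod_mul (multipliable_one_sub_mul_pow (-q) hq)]
  exact tprod_congr fun k ↦ by ring

lemma exists_norm_inv_qPochhammer_le (hq : ‖q‖ < 1) :
    ∃ C, 0 ≤ C ∧ ∀ n, ‖(qPochhammer q q n)⁻¹‖ ≤ C := by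
  have hne := qPochhammerInf_ne_zero hq (mul_pow_ne_one hq hq.le)
  obtain ⟨C, hC⟩ := ((tendsto_qPochhammer q hq).inv₀ hne).norm.bddAbove_range
  exact ⟨C, (norm_nonneg _).trans (hC ⟨0, rfl⟩), fun n ↦ hC ⟨n, rfl⟩⟩

lemma norm_pow_div_qPochhammer_le {C : ℝ} (hC : ∀ n, ‖(qPochhammer q q n)⁻¹‖ ≤ C) (n : ℕ) :
    ‖z ^ n / qPochhammer q q n‖ ≤ C * ‖z‖ ^ n := by
  rw [div_eq_mul_inv, norm_mul, norm_pow, mul_comm]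
  exact mul_le_mul_of_nonneg_right (hC n) (by positivity)

lemma summable_pow_div_qPochhammer (hq : ‖q‖ < 1) (hz : ‖z‖ < 1) :
    Summable fun n ↦ z ^ n / qPochhammer q q n := by
  obtain ⟨C, -, hC⟩ := exists_norm_inv_qPochhammer_le hq
  exact .of_norm_bounded ((summable_geometric_of_lt_one (norm_nonneg z) hz).mul_left C)
    (norm_pow_div_qPochhammer_le hC)

lemma one_sub_mul_eulerSeries (hq : ‖q‖ < 1) (hz : ‖z‖ < 1) :
    (1 - z) * eulerSeries q z = eulerSeries q (q * z) := by
  have hqz : ‖q * z‖ < 1 := by simpa using norm_pow_mul_lt_one hq.le hz 1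
  have hz' := (summable_pow_div_qPochhammer hq hz).hasSum
  have hqz' := (summable_pow_div_qPochhammer hq hqz).hasSum
  -- the `(n + 1)`-st term of `E(z) - E(qz)` is `z` times the `n`-th term of `E(z)`
  have hshift : HasSum (fun n ↦ (z ^ (n + 1) - (q * z) ^ (n + 1)) / qPochhammer q q (n + 1))
      (z * eulerSeries q z) := by
    refine (hz'.mul_left z).congr_fun fun n ↦ ?_
    have h1 := qPochhammer_ne_zero (mul_pow_ne_one hq hq.le) n
    have h2 := sub_ne_zero.2 (mul_pow_ne_one hq hq.le n).symm
    rw [qPochhammer_succ]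
    field_simp
    ring
  have hdiff : HasSum (fun n ↦ (z ^ n - (q * z) ^ n) / qPochhammer q q n)
      (z * eulerSeries q z) := by
    simpa using hshift.zero_add (f := fun n ↦ (z ^ n - (q * z) ^ n) / qPochhammer q q n)
  have hsub : HasSum (fun n ↦ (z ^ n - (q * z) ^ n) / qPochhammer q q n)
      (eulerSeries q z - eulerSeries q (q * z)) :=
    (hz'.sub hqz').congr_fun fun n ↦ sub_div _ _ _
  linear_combination hsub.unique hdiff

lemma qPochhammer_mul_eulerSeries (hq : ‖q‖ < 1) (hz : ‖z‖ < 1) (N : ℕ) :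
    qPochhammer z q N * eulerSeries q z = eulerSeries q (q ^ N * z) := by
  induction N with
  | zero => simp [qPochhammer]
  | succ N ih =>
    rw [qPochhammer_succ, mul_right_comm, ih, pow_succ', mul_assoc,
      ← one_sub_mul_eulerSeries hq (norm_pow_mul_lt_one hq.le hz N), mul_comm (q ^ N), mul_comm]

lemma tendsto_eulerSeries_nhds_zero (hq : ‖q‖ < 1) : Tendsto (eulerSeries q) (𝓝 0) (𝓝 1) := by
  obtain ⟨C, hC0, hC⟩ := exists_norm_inv_qPochhammer_le hq
  have hlim : ∑' n, (0 : ℂ) ^ n / qPochhammer q q n = 1 := by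
    rw [tsum_eq_single 0 fun n hn ↦ by simp [hn]]
    simp [qPochhammer]
  rw [← hlim]
  refine tendsto_tsum_of_dominated_convergence
    ((summable_geometric_of_lt_one (by norm_num) (by norm_num : (1 / 2 : ℝ) < 1)).mul_left C)
    (fun n ↦ ((continuous_pow n).div_const _).tendsto 0) ?_
  filter_upwards [tendsto_norm_zero.eventually (eventually_le_nhds (by norm_num : (0 : ℝ) < 1 / 2))]
    with w hw n
  exact (norm_pow_div_qPochhammer_le hC n).trans
    (mul_le_mul_of_nonneg_left (pow_le_pow_left₀ (norm_nonneg w) hw n) hC0)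

theorem qPochhammerInf_mul_eulerSeries (hq : ‖q‖ < 1) (hz : ‖z‖ < 1) :
    qPochhammerInf z q * eulerSeries q z = 1 := by
  have hpow : Tendsto (fun N : ℕ ↦ q ^ N * z) atTop (𝓝 0) := by
    simpa using (tendsto_pow_atTop_nhds_zero_of_norm_lt_one hq).mul_const z
  refine tendsto_nhds_unique ((tendsto_qPochhammer z hq).mul_const _) ?_
  exact ((tendsto_eulerSeries_nhds_zero hq).comp hpow).congr fun N ↦
    (qPochhammer_mul_eulerSeries hq hz N).symm

theorem hasSum_pow_mul_qPochhammerInf (hq : ‖q‖ < 1) (hz : ‖z‖ < 1) :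
    HasSum (fun n ↦ z ^ n * qPochhammerInf (q ^ (n + 1)) q)
      (qPochhammerInf q q / qPochhammerInf z q) := by
  have htail (n : ℕ) : qPochhammerInf (q ^ (n + 1)) q = qPochhammerInf q q / qPochhammer q q n := by
    rw [← qPochhammer_mul_qPochhammerInf q hq n, pow_succ', mul_div_cancel_left₀ _
      (qPochhammer_ne_zero (mul_pow_ne_one hq hq.le) n)]
  rw [div_eq_mul_inv, ← eq_inv_of_mul_eq_one_right (qPochhammerInf_mul_eulerSeries hq hz)]
  refine ((summable_pow_div_qPochhammer hq hz).hasSum.mul_left _).congr_fun fun n ↦ ?_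
  rw [htail, mul_div_left_comm]

lemma hasSum_ite_odd {x s t : ℂ} {c : ℕ → ℂ} (hs : HasSum (fun n ↦ x ^ n * c n) s)
    (ht : HasSum (fun n ↦ (-x) ^ n * c n) t) :
    HasSum (fun n ↦ if Odd n then x ^ n * c n else 0) ((s - t) / 2) := by
  refine ((hs.sub ht).div_const 2).congr_fun fun n ↦ ?_
  rcases Nat.even_or_odd n with hn | hn
  · simp [hn.neg_pow, Nat.not_odd_iff_even.2 hn]
  · rw [if_pos hn, hn.neg_pow]; ring

end QPochhammer

/-- For `|q| < 1`, `F_{S_{1,2}}(q) = (1/2)(1 - (q;q)_∞² / (q²;q²)_∞)`. -/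
theorem stmt15 (q : ℂ) (hq : ‖q‖ < 1) :
    (∑' n : ℕ, if Odd n then q ^ n * ∏' m : ℕ, (1 - q ^ (m + 1 + n)) else 0) =
      (1 / 2) * (1 - (∏' n : ℕ, (1 - q ^ (n + 1))) ^ 2 /
        ∏' n : ℕ, (1 - q ^ (2 * (n + 1)))) := by
  have hsum := hasSum_ite_odd (hasSum_pow_mul_qPochhammerInf hq hq)
    (hasSum_pow_mul_qPochhammerInf hq (z := -q) (by rwa [norm_neg]))
  have hne := qPochhammerInf_ne_zero hq (mul_pow_ne_one hq hq.le)
  have hqq : ∏' n : ℕ, (1 - q ^ (n + 1)) = qPochhammerInf q q := tprod_congr fun n ↦ by ring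
  have hq2 : ∏' n : ℕ, (1 - q ^ (2 * (n + 1))) = qPochhammerInf (q ^ 2) (q ^ 2) :=
    tprod_congr fun n ↦ by ring
  have htail (n : ℕ) : ∏' m : ℕ, (1 - q ^ (m + 1 + n)) = qPochhammerInf (q ^ (n + 1)) q :=
    tprod_congr fun m ↦ by ring
  simp_rw [htail]
  rw [hsum.tsum_eq, hqq, hq2, qPochhammerInf_sq_sq hq, sq,
    mul_div_mul_left _ _ hne, div_self hne]
  ring
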